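/- Let X ≥ 1 and let s = σ + it with σ = Re s > θ and s ≠ 1. Then |ζ_X(s) − κ·(1 − X^(1−s))/(s−1)| ≤ A·( |s|·(1 − X^(θ−σ))/(σ−θ) + X^(θ−σ) ) ≤ A·min( |s|/(σ−θ), |s|·log X + X^(θ−σ) ). -/

import Mathlib

open scoped BigOperators Real

/-- The multiplicative norm on the Beurling generalized integers `ℕ →₀ ℕ`
generated by the primes `q i`. -/
noncomputable def bNorm (q : ℕ → ℝ) (g : ℕ →₀ ℕ) : ℝ :=
  g.prod fun i k => q i ^ k

/-- The integer counting function `N(x)`. -/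
noncomputable def bN (q : ℕ → ℝ) (x : ℝ) : ℕ :=
  {g : ℕ →₀ ℕ | bNorm q g ≤ x}.ncard

/-- The remainder `R(x) = N(x) - κ(x-1)`. -/
noncomputable def bR (q : ℕ → ℝ) (κ : ℝ) (x : ℝ) : ℝ :=
  (bN q x : ℝ) - κ * (x - 1)

/-- The Beurling zeta function, via the analytic continuation formula
`ζ(s) = κ/(s-1) + s ∫_1^∞ R(x) x^(-s-1) dx`. -/
noncomputable def bZeta (q : ℕ → ℝ) (κ : ℝ) (s : ℂ) : ℂ :=
  (κ : ℂ) / (s - 1) + s * ∫ x in Set.Ioi (1 : ℝ), (bR q κ x : ℂ) * (x : ℂ) ^ (-s - 1)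

/-- The partial sums `ζ_X(s) = ∑_{‖g‖ ≤ X} ‖g‖^{-s}`. -/
noncomputable def bZetaX (q : ℕ → ℝ) (X : ℝ) (s : ℂ) : ℂ :=
  ∑ᶠ g ∈ {g : ℕ →₀ ℕ | bNorm q g ≤ X}, (bNorm q g : ℂ) ^ (-s)

open MeasureTheory Set

/-!
Partial summation: writing `‖g‖^(-s) = X^(-s) + s ∫_{‖g‖}^X x^(-s-1) dx` and summing over
`‖g‖ ≤ X` gives `ζ_X(s) = N(X) X^(-s) + s ∫_1^X N(x) x^(-s-1) dx`. Splitting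
`N(x) = κ(x - 1) + R(x)`, the `κ`-part integrates by parts to `κ (1 - X^(1-s)) / (s - 1)`, and
Axiom A bounds what remains, `R(X) X^(-s) + s ∫_1^X R(x) x^(-s-1) dx`, by
`A X^(θ-σ) + A |s| (1 - X^(θ-σ)) / (σ - θ)`. The second inequality follows from
`1 - X^(θ-σ) ≤ (σ - θ) log X` and `σ - θ ≤ |s|`.
-/

section PartialSummation

variable {E : Type*} [NormedAddCommGroup E] [NormedSpace ℝ E]

theorem setIntegral_Ioc_indicator_Ici {a b c : ℝ} (hac : a ≤ c) (f : ℝ → E) :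
    ∫ x in Ioc a b, (Ici c).indicator f x = ∫ x in Ioc c b, f x := by
  rw [setIntegral_indicator measurableSet_Ici]
  refine setIntegral_congr_set ?_
  rw [show Ioc c b = Ioc a b ∩ Ioi c by rw [Ioc_inter_Ioi, max_eq_right hac]]
  exact (ae_eq_refl _).inter Ioi_ae_eq_Ici.symm

theorem sum_comp_eq_card_smul_sub_integral [CompleteSpace E] {ι : Type*} (T : Finset ι)
    (w : ι → ℝ) {a b : ℝ} {f f' : ℝ → E} (hab : a ≤ b) (hw : ∀ i ∈ T, w i ∈ Icc a b)
    (hf : ∀ x ∈ Icc a b, HasDerivAt f (f' x) x) (hf' : IntervalIntegrable f' volume a b) :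
    ∑ i ∈ T, f (w i)
      = (T.card : ℝ) • f b - ∫ x in a..b, ((T.filter (w · ≤ x)).card : ℝ) • f' x := by
  have hone : ∀ i ∈ T, f (w i) = f b - ∫ x in Ioc a b, (Ici (w i)).indicator f' x := by
    intro i hi
    obtain ⟨haw, hwb⟩ := hw i hi
    rw [setIntegral_Ioc_indicator_Ici haw, ← intervalIntegral.integral_of_le hwb,
      intervalIntegral.integral_eq_sub_of_hasDerivAt, sub_sub_cancel]
    · rw [uIcc_of_le hwb]
      exact fun x hx => hf x ⟨haw.trans hx.1, hx.2⟩
    · refine hf'.mono_set ?_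
      rw [uIcc_of_le hwb, uIcc_of_le hab]
      exact Icc_subset_Icc_left haw
  have hcount : ∀ x, ∑ i ∈ T, (Ici (w i)).indicator f' x
      = ((T.filter (w · ≤ x)).card : ℝ) • f' x := fun x => by
    simp only [indicator_apply, mem_Ici, ← Finset.sum_filter, Finset.sum_const,
      Nat.cast_smul_eq_nsmul]
  have hint : IntegrableOn f' (Ioc a b) :=
    (intervalIntegrable_iff_integrableOn_Ioc_of_le hab).1 hf'
  rw [Finset.sum_congr rfl hone, Finset.sum_sub_distrib, Finset.sum_const, Nat.cast_smul_eq_nsmul,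
    ← integral_finsetSum _ fun i _ => hint.indicator measurableSet_Ici,
    intervalIntegral.integral_of_le hab]
  simp only [hcount]

end PartialSummation

theorem pos_of_mem_uIcc_one {X x : ℝ} (hX : 1 ≤ X) (hx : x ∈ uIcc 1 X) : 0 < x := by
  rw [uIcc_of_le hX] at hx
  exact zero_lt_one.trans_le hx.1

theorem hasDerivAt_ofReal_cpow_neg {x : ℝ} (hx : 0 < x) (s : ℂ) :
    HasDerivAt (fun y : ℝ => (y : ℂ) ^ (-s)) (-s * (x : ℂ) ^ (-s - 1)) x :=
  (Complex.hasStrictDerivAt_cpow_const (Complex.ofReal_mem_slitPlane.2 hx)).hasDerivAt.comp_ofReal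

theorem continuousOn_ofReal_cpow_const (z : ℂ) :
    ContinuousOn (fun x : ℝ => (x : ℂ) ^ z) (Ioi 0) := fun x hx =>
  (Complex.continuousAt_ofReal_cpow_const x z (Or.inr (ne_of_gt hx))).continuousWithinAt

theorem continuousOn_const_mul_ofReal_cpow_uIcc {X : ℝ} (hX : 1 ≤ X) (c z : ℂ) :
    ContinuousOn (fun x : ℝ => c * (x : ℂ) ^ z) (uIcc 1 X) :=
  continuousOn_const.mul <|
    (continuousOn_ofReal_cpow_const z).mono fun _ hx => pos_of_mem_uIcc_one hX hx

theorem integral_sub_one_mul_cpow {X : ℝ} (hX : 1 ≤ X) {s : ℂ} (hs1 : s ≠ 1) :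
    ((X : ℂ) - 1) * (X : ℂ) ^ (-s)
        - ∫ x in (1 : ℝ)..X, ((x : ℂ) - 1) * (-s * (x : ℂ) ^ (-s - 1))
      = (1 - (X : ℂ) ^ ((1 : ℂ) - s)) / (s - 1) := by
  have hparts := intervalIntegral.integral_mul_deriv_eq_deriv_mul
    (u := fun x : ℝ => (x : ℂ) - 1) (u' := fun _ => 1)
    (fun x _ => (hasDerivAt_id (x : ℂ)).comp_ofReal.sub_const 1)
    (fun x hx => hasDerivAt_ofReal_cpow_neg (pos_of_mem_uIcc_one hX hx) s)
    intervalIntegrable_const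
    (continuousOn_const_mul_ofReal_cpow_uIcc hX (-s) _).intervalIntegrable
  simp only [Complex.ofReal_one, sub_self, zero_mul, sub_zero, one_mul] at hparts
  have hne : -s ≠ -1 := fun h => hs1 (neg_inj.1 h)
  rw [hparts, sub_sub_cancel,
    integral_cpow (Or.inr ⟨hne, fun h => (pos_of_mem_uIcc_one hX h).false⟩), Complex.ofReal_one,
    Complex.one_cpow, neg_add_eq_sub, ← neg_div_neg_eq, neg_sub, neg_sub]

theorem one_le_bNorm {q : ℕ → ℝ} (hq : ∀ i, 1 < q i) (g : ℕ →₀ ℕ) : 1 ≤ bNorm q g :=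
  Finset.one_le_prod fun i _ => one_le_pow₀ (hq i).le

section Counting

variable {q : ℕ → ℝ} (hfin : ∀ x : ℝ, {g : ℕ →₀ ℕ | bNorm q g ≤ x}.Finite)
include hfin

theorem bN_mono : Monotone (bN q) :=
  fun _ y hxy => Set.ncard_le_ncard (fun _ hg => le_trans hg hxy) (hfin y)

theorem bN_eq_card_filter {x X : ℝ} (hxX : x ≤ X) :
    bN q x = ((hfin X).toFinset.filter (bNorm q · ≤ x)).card := by
  rw [bN, ← Set.ncard_coe_finset]
  congr 1
  ext g
  simp only [Set.mem_ofPred_eq, Finset.coe_filter, Set.Finite.mem_toFinset]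
  exact ⟨fun h => ⟨h.trans hxX, h⟩, And.right⟩

theorem bZetaX_eq_bN_mul_sub_integral (hq : ∀ i, 1 < q i) {X : ℝ} (hX : 1 ≤ X) (s : ℂ) :
    bZetaX q X s = (bN q X : ℂ) * (X : ℂ) ^ (-s)
      - ∫ x in (1 : ℝ)..X, (bN q x : ℂ) * (-s * (x : ℂ) ^ (-s - 1)) := by
  rw [bZetaX, ← (hfin X).coe_toFinset, finsum_mem_coe_finset,
    sum_comp_eq_card_smul_sub_integral _ (bNorm q) hX
      (fun g hg => ⟨one_le_bNorm hq g, (hfin X).mem_toFinset.1 hg⟩)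
      (fun x hx => hasDerivAt_ofReal_cpow_neg (zero_lt_one.trans_le hx.1) s)
      (continuousOn_const_mul_ofReal_cpow_uIcc hX (-s) _).intervalIntegrable]
  simp only [Complex.real_smul, Complex.ofReal_natCast]
  rw [bN_eq_card_filter hfin le_rfl,
    Finset.filter_true_of_mem (p := (bNorm q · ≤ X)) fun g hg => (hfin X).mem_toFinset.1 hg]
  congr 1
  refine intervalIntegral.integral_congr fun x hx => ?_
  rw [uIcc_of_le hX] at hx
  simp only [bN_eq_card_filter hfin hx.2]

theorem bZetaX_sub_eq_bR (hq : ∀ i, 1 < q i) (κ : ℝ) {X : ℝ} (hX : 1 ≤ X) {s : ℂ}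
    (hs1 : s ≠ 1) :
    bZetaX q X s - (κ : ℂ) * (1 - (X : ℂ) ^ ((1 : ℂ) - s)) / (s - 1)
      = (bR q κ X : ℂ) * (X : ℂ) ^ (-s)
        + s * ∫ x in (1 : ℝ)..X, (bR q κ x : ℂ) * (x : ℂ) ^ (-s - 1) := by
  have hcont := continuousOn_const_mul_ofReal_cpow_uIcc hX (-s) (-s - 1)
  have hbN : ∀ x, (bN q x : ℂ) = bR q κ x + κ * ((x : ℂ) - 1) := fun x => by
    simp only [bR]; push_cast; ring
  have hbN_int : IntervalIntegrable
      (fun x : ℝ => (bN q x : ℂ) * (-s * (x : ℂ) ^ (-s - 1))) volume 1 X := by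
    have hmono : Monotone fun x => (bN q x : ℝ) := Nat.mono_cast.comp (bN_mono hfin)
    simpa only [Complex.real_smul, Complex.ofReal_natCast] using
      hmono.intervalIntegrable.smul_continuousOn hcont
  have hlin_int : IntervalIntegrable
      (fun x : ℝ => κ * (((x : ℂ) - 1) * (-s * (x : ℂ) ^ (-s - 1)))) volume 1 X :=
    (continuousOn_const.mul
      ((Complex.continuous_ofReal.sub continuous_const).continuousOn.mul hcont)).intervalIntegrable
  have hsplit : ∫ x in (1 : ℝ)..X, (bN q x : ℂ) * (-s * (x : ℂ) ^ (-s - 1))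
      = -s * (∫ x in (1 : ℝ)..X, (bR q κ x : ℂ) * (x : ℂ) ^ (-s - 1))
        + κ * ∫ x in (1 : ℝ)..X, ((x : ℂ) - 1) * (-s * (x : ℂ) ^ (-s - 1)) := by
    rw [← sub_eq_iff_eq_add, ← intervalIntegral.integral_const_mul,
      ← intervalIntegral.integral_const_mul, ← intervalIntegral.integral_sub hbN_int hlin_int]
    congr 1 with x
    rw [hbN]
    ring
  rw [bZetaX_eq_bN_mul_sub_integral hfin hq hX, hsplit, mul_div_assoc,
    ← integral_sub_one_mul_cpow hX hs1, hbN]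
  ring

end Counting

theorem norm_ofReal_mul_cpow_neg_le {r A θ x : ℝ} (hx : 0 < x) (hr : |r| ≤ A * x ^ θ) (z : ℂ) :
    ‖(r : ℂ) * (x : ℂ) ^ (-z)‖ ≤ A * x ^ (θ - z.re) := by
  rw [norm_mul, Complex.norm_real, Real.norm_eq_abs, Complex.norm_cpow_eq_rpow_re_of_pos hx,
    Complex.neg_re, sub_eq_add_neg, Real.rpow_add hx, ← mul_assoc]
  exact mul_le_mul_of_nonneg_right hr (Real.rpow_nonneg hx.le _)

theorem norm_integral_ofReal_mul_cpow_le {R : ℝ → ℝ} {A θ X : ℝ} (hX : 1 ≤ X)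
    (hR : ∀ x, 1 ≤ x → |R x| ≤ A * x ^ θ) {s : ℂ} (hs : θ < s.re) :
    ‖∫ x in (1 : ℝ)..X, (R x : ℂ) * (x : ℂ) ^ (-s - 1)‖
      ≤ A * ((1 - X ^ (θ - s.re)) / (s.re - θ)) := by
  have hbound : ∀ x ∈ Ioc 1 X, ‖(R x : ℂ) * (x : ℂ) ^ (-s - 1)‖ ≤ A * x ^ (θ - s.re - 1) := by
    intro x hx
    have := norm_ofReal_mul_cpow_neg_le (zero_lt_one.trans hx.1) (hR x hx.1.le) (s + 1)
    rwa [neg_add', Complex.add_re, Complex.one_re, ← sub_sub] at this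
  have hexp : θ - s.re - 1 ≠ -1 := by linarith
  calc _ ≤ ∫ x in (1 : ℝ)..X, A * x ^ (θ - s.re - 1) :=
        intervalIntegral.norm_integral_le_of_norm_le hX (ae_of_all _ hbound)
          (ContinuousOn.intervalIntegrable fun x hx => (continuousAt_const.mul
            (Real.continuousAt_rpow_const x _
              (Or.inl (pos_of_mem_uIcc_one hX hx).ne'))).continuousWithinAt)
    _ = A * ((1 - X ^ (θ - s.re)) / (s.re - θ)) := by
      rw [intervalIntegral.integral_const_mul,
        integral_rpow (Or.inr ⟨hexp, fun h => (pos_of_mem_uIcc_one hX h).false⟩),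
        sub_add_cancel, Real.one_rpow, ← neg_div_neg_eq, neg_sub, neg_sub]

theorem one_sub_rpow_neg_le_mul_log {X : ℝ} (hX : 0 < X) (δ : ℝ) :
    1 - X ^ (-δ) ≤ δ * Real.log X := by
  have := Real.one_sub_inv_le_log_of_pos (Real.rpow_pos_of_pos hX δ)
  rwa [← Real.rpow_neg hX.le, Real.log_rpow hX] at this

theorem mul_one_sub_div_add_le_min {c δ Y L : ℝ} (hδ : 0 < δ) (hδc : δ ≤ c) (hY : 0 ≤ Y)
    (hL : 1 - Y ≤ δ * L) : c * (1 - Y) / δ + Y ≤ min (c / δ) (c * L + Y) := by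
  refine le_min ?_ (add_le_add_left ?_ Y)
  · rw [div_add' _ _ _ hδ.ne', div_le_div_iff_of_pos_right hδ]
    nlinarith
  · rw [div_le_iff₀ hδ]
    nlinarith [hδ.le.trans hδc]

theorem statement_5_general
    (q : ℕ → ℝ) (hq : ∀ i, 1 < q i)
    (hfin : ∀ x : ℝ, {g : ℕ →₀ ℕ | bNorm q g ≤ x}.Finite)
    (κ A θ : ℝ) (hA : 0 < A) (hθ0 : 0 < θ)
    (hAxiomA : ∀ x : ℝ, 1 ≤ x → |bR q κ x| ≤ A * x ^ θ)
    (X : ℝ) (hX : 1 ≤ X) (s : ℂ) (hs : θ < s.re) (hs1 : s ≠ 1) :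
    ‖bZetaX q X s - (κ : ℂ) * (1 - (X : ℂ) ^ ((1 : ℂ) - s)) / (s - 1)‖ ≤
      A * (‖s‖ * (1 - X ^ (θ - s.re)) / (s.re - θ) + X ^ (θ - s.re)) ∧
    A * (‖s‖ * (1 - X ^ (θ - s.re)) / (s.re - θ) + X ^ (θ - s.re)) ≤
      A * min (‖s‖ / (s.re - θ)) (‖s‖ * Real.log X + X ^ (θ - s.re)) := by
  have hX0 : 0 < X := zero_lt_one.trans_le hX
  have hlog : 1 - X ^ (θ - s.re) ≤ (s.re - θ) * Real.log X := by
    simpa only [neg_sub] using one_sub_rpow_neg_le_mul_log hX0 (s.re - θ)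
  refine ⟨?_, mul_le_mul_of_nonneg_left (mul_one_sub_div_add_le_min (sub_pos.2 hs)
    ((sub_le_self _ hθ0.le).trans (Complex.re_le_norm s)) (Real.rpow_nonneg hX0.le _) hlog) hA.le⟩
  rw [bZetaX_sub_eq_bR hfin hq κ hX hs1]
  calc _ ≤ ‖(bR q κ X : ℂ) * (X : ℂ) ^ (-s)‖
        + ‖s‖ * ‖∫ x in (1 : ℝ)..X, (bR q κ x : ℂ) * (x : ℂ) ^ (-s - 1)‖ :=
        (norm_add_le _ _).trans_eq (by rw [norm_mul s])
    _ ≤ A * X ^ (θ - s.re) + ‖s‖ * (A * ((1 - X ^ (θ - s.re)) / (s.re - θ))) :=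
        add_le_add (norm_ofReal_mul_cpow_neg_le hX0 (hAxiomA X hX) s)
          (mul_le_mul_of_nonneg_left (norm_integral_ofReal_mul_cpow_le hX hAxiomA hs)
            (norm_nonneg s))
    _ = _ := by ring

theorem statement_5
    (q : ℕ → ℝ) (hq : ∀ i, 1 < q i)
    (hfin : ∀ x : ℝ, {g : ℕ →₀ ℕ | bNorm q g ≤ x}.Finite)
    (κ A θ : ℝ) (hκ : 0 < κ) (hA : 0 < A) (hθ0 : 0 < θ) (hθ1 : θ < 1)
    (hAxiomA : ∀ x : ℝ, 1 ≤ x → |bR q κ x| ≤ A * x ^ θ)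
    (X : ℝ) (hX : 1 ≤ X) (s : ℂ) (hs : θ < s.re) (hs1 : s ≠ 1) :
    ‖bZetaX q X s - (κ : ℂ) * (1 - (X : ℂ) ^ ((1 : ℂ) - s)) / (s - 1)‖ ≤
      A * (‖s‖ * (1 - X ^ (θ - s.re)) / (s.re - θ) + X ^ (θ - s.re)) ∧
    A * (‖s‖ * (1 - X ^ (θ - s.re)) / (s.re - θ) + X ^ (θ - s.re)) ≤
      A * min (‖s‖ / (s.re - θ)) (‖s‖ * Real.log X + X ^ (θ - s.re)) :=
  statement_5_general q hq hfin κ A θ hA hθ0 hAxiomA X hX s hs hs1
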